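/- arXiv:2505.09136 — 2 statements merged into one kernel-verified Lean document; each statement's English description precedes it below -/
import Mathlib

section
/- For all integers s, t ≥ 1 with n = s + t + 5, the characteristic polynomial of the 7×7 real matrix Q_4(s,t) satisfies det(λI − Q_4(s,t)) = (λ−1)(λ+1)(λ⁵ + (7−n)λ⁴ − (6n−22)λ³ + (8st + 4n + 8t − 30)λ² + (32st + 22n − 103)λ + 13n − 72st − 40t − 57). -/
/-!
The vectors `e₃ - e₂` and `e₆ - e₁ - e₄ - e₅` are left eigenvectors of `Q₄(s,t)` for the
eigenvalues `1` and `-1`, whatever `s` and `t`. Conjugating by the unimodular matrix that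
performs the corresponding row operations gives a matrix whose rows 3 and 6 are `e₃` and `-e₆`,
so two Laplace expansions split off the factor `(x - 1)(x + 1)` and leave the characteristic
polynomial of a `5 × 5` matrix, which is expanded directly.
-/

open Matrix

/-- The signed-complete-graph matrix `A(K_n, H^-)`: zero diagonal, `-1` on edges of `H`
(vertices labelled `1, …, n`, index `i : Fin n` corresponds to label `i+1`), `+1` otherwise. -/
noncomputable def signMat (n : ℕ) (E : ℕ → ℕ → Prop) : Matrix (Fin n) (Fin n) ℝ :=
  open scoped Classical in
  Matrix.of fun i j => if i = j then 0 else if E ((i : ℕ) + 1) ((j : ℕ) + 1) then -1 else 1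

/-- The largest eigenvalue of a real matrix (the supremum of its spectrum). -/
noncomputable def lam1 {n : ℕ} (M : Matrix (Fin n) (Fin n) ℝ) : ℝ :=
  sSup (spectrum ℝ M)

/-- `{i, j} = {a, b}` as an (unordered) edge. -/
def adjPair (a b i j : ℕ) : Prop := (i = a ∧ j = b) ∨ (i = b ∧ j = a)

/-- `U₁`: triangle `1 2 3` together with the pendant edges `{1, i}` for `4 ≤ i ≤ n`;
i.e. vertex `1` is adjacent to every other vertex, plus the edge `{2,3}`. -/
def U1edge (i j : ℕ) : Prop :=
  (i = 1 ∧ 2 ≤ j) ∨ (j = 1 ∧ 2 ≤ i) ∨ adjPair 2 3 i j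

/-- `D_{1,n-3}`: edges `{1,2}`, `{2,3}` and `{3,i}` for `4 ≤ i ≤ n`. -/
def Dedge (i j : ℕ) : Prop :=
  adjPair 1 2 i j ∨ adjPair 2 3 i j ∨ (i = 3 ∧ 4 ≤ j) ∨ (j = 3 ∧ 4 ≤ i)

/-- `U₂`: triangles `1 2 3` and `1 4 5` sharing vertex `1`, plus pendant edges `{1,i}`
for `6 ≤ i ≤ n`; i.e. vertex `1` adjacent to all, plus edges `{2,3}` and `{4,5}`. -/
def U2edge (i j : ℕ) : Prop :=
  (i = 1 ∧ 2 ≤ j) ∨ (j = 1 ∧ 2 ≤ i) ∨ adjPair 2 3 i j ∨ adjPair 4 5 i j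

/-- `H₁(s,t)` on `n = s + t + 4` vertices: triangle `1 2 3`, `s` pendant vertices
`5, …, s+4` at vertex `1`, vertex `4` adjacent to `1`, and `t` pendant vertices
`s+5, …, s+t+4` at vertex `4`. -/
def H1edge (s t : ℕ) (i j : ℕ) : Prop :=
  adjPair 1 2 i j ∨ adjPair 1 3 i j ∨ adjPair 2 3 i j ∨ adjPair 1 4 i j ∨
  (i = 1 ∧ 5 ≤ j ∧ j ≤ s + 4) ∨ (j = 1 ∧ 5 ≤ i ∧ i ≤ s + 4) ∨
  (i = 4 ∧ s + 5 ≤ j ∧ j ≤ s + t + 4) ∨ (j = 4 ∧ s + 5 ≤ i ∧ i ≤ s + t + 4)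

/-- `H₂(s,t)` on `n = s + t + 5` vertices: triangle `1 2 3`, edges `{1,4}` and `{4,5}`,
`s` pendant vertices `6, …, s+5` at vertex `4`, and `t` pendant vertices
`s+6, …, s+t+5` at vertex `5`. -/
def H2edge (s t : ℕ) (i j : ℕ) : Prop :=
  adjPair 1 2 i j ∨ adjPair 1 3 i j ∨ adjPair 2 3 i j ∨ adjPair 1 4 i j ∨ adjPair 4 5 i j ∨
  (i = 4 ∧ 6 ≤ j ∧ j ≤ s + 5) ∨ (j = 4 ∧ 6 ≤ i ∧ i ≤ s + 5) ∨
  (i = 5 ∧ s + 6 ≤ j ∧ j ≤ s + t + 5) ∨ (j = 5 ∧ s + 6 ≤ i ∧ i ≤ s + t + 5)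

/-- `K_{1,s} ∪ t·P₂` on `n = s + 1 + 2t` vertices: star with center `1` and leaves
`2, …, s+1`, together with the `t` disjoint edges `{s+2k+2, s+2k+3}`, `0 ≤ k < t`. -/
def starMatchEdge (s t : ℕ) (i j : ℕ) : Prop :=
  (i = 1 ∧ 2 ≤ j ∧ j ≤ s + 1) ∨ (j = 1 ∧ 2 ≤ i ∧ i ≤ s + 1) ∨
  (∃ k, k < t ∧ adjPair (s + 2 * k + 2) (s + 2 * k + 3) i j)

/-- The quotient matrix `Q₃(s,t)`. -/
noncomputable def Q3 (s t : ℕ) : Matrix (Fin 6) (Fin 6) ℝ :=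
  !![0, -1, -1, -1, -(s : ℝ), (t : ℝ);
     -1, 0, -1, 1, (s : ℝ), (t : ℝ);
     -1, -1, 0, 1, (s : ℝ), (t : ℝ);
     -1, 1, 1, 0, (s : ℝ), -(t : ℝ);
     -1, 1, 1, 1, (s : ℝ) - 1, (t : ℝ);
     1, 1, 1, -1, (s : ℝ), (t : ℝ) - 1]

/-- The quotient matrix `Q₄(s,t)`. -/
noncomputable def Q4 (s t : ℕ) : Matrix (Fin 7) (Fin 7) ℝ :=
  !![0, -1, -1, -1, 1, (s : ℝ), (t : ℝ);
     -1, 0, -1, 1, 1, (s : ℝ), (t : ℝ);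
     -1, -1, 0, 1, 1, (s : ℝ), (t : ℝ);
     -1, 1, 1, 0, -1, -(s : ℝ), (t : ℝ);
     1, 1, 1, -1, 0, (s : ℝ), -(t : ℝ);
     1, 1, 1, -1, 1, (s : ℝ) - 1, (t : ℝ);
     1, 1, 1, 1, -1, (s : ℝ), (t : ℝ) - 1]

namespace Matrix

variable {R : Type*} [CommRing R]

theorem det_smul_one_sub_conj {m : Type*} [Fintype m] [DecidableEq m] {P P' : Matrix m m R}
    (hPP' : P * P' = 1) (hP'P : P' * P = 1) (A : Matrix m m R) (x : R) :
    det (x • 1 - P * A * P') = det (x • 1 - A) := by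
  have h : x • 1 - P * A * P' = P * (x • 1 - A) * P' := by
    rw [Matrix.mul_sub, Matrix.sub_mul, Matrix.mul_smul, Matrix.smul_mul, Matrix.mul_one, hPP']
  rw [h, det_conj_of_mul_eq_one hPP' hP'P]

theorem det_smul_one_sub_of_offDiag_row_eq_zero {n : ℕ} (A : Matrix (Fin (n + 1)) (Fin (n + 1)) R)
    (i : Fin (n + 1)) (hA : ∀ j, j ≠ i → A i j = 0) (x : R) :
    det (x • 1 - A) = (x - A i i) * det (x • 1 - A.submatrix i.succAbove i.succAbove) := by
  rw [det_succ_row _ i, Finset.sum_eq_single i]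
  · have hminor : (x • 1 - A).submatrix i.succAbove i.succAbove =
        x • 1 - A.submatrix i.succAbove i.succAbove := by
      ext j k
      simp [one_apply]
    simp [hminor, ← two_mul]
  · intro j _ hj
    simp [hA j hj, one_apply_ne' hj]
  · simp

end Matrix

def Q4Deflation : Matrix (Fin 7) (Fin 7) ℝ :=
  !![1, 0, 0, 0, 0, 0, 0;
     0, 1, 0, 0, 0, 0, 0;
     0, -1, 1, 0, 0, 0, 0;
     0, 0, 0, 1, 0, 0, 0;
     0, 0, 0, 0, 1, 0, 0;
     -1, 0, 0, -1, -1, 1, 0;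
     0, 0, 0, 0, 0, 0, 1]

def Q4DeflationInv : Matrix (Fin 7) (Fin 7) ℝ :=
  !![1, 0, 0, 0, 0, 0, 0;
     0, 1, 0, 0, 0, 0, 0;
     0, 1, 1, 0, 0, 0, 0;
     0, 0, 0, 1, 0, 0, 0;
     0, 0, 0, 0, 1, 0, 0;
     1, 0, 0, 1, 1, 1, 0;
     0, 0, 0, 0, 0, 0, 1]

theorem Q4Deflation_mul_inv : Q4Deflation * Q4DeflationInv = 1 := by
  ext i j
  fin_cases i <;> fin_cases j <;>
    simp [Q4Deflation, Q4DeflationInv, mul_apply, Fin.sum_univ_succ, one_apply]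

theorem Q4DeflationInv_mul : Q4DeflationInv * Q4Deflation = 1 := by
  ext i j
  fin_cases i <;> fin_cases j <;>
    simp [Q4Deflation, Q4DeflationInv, mul_apply, Fin.sum_univ_succ, one_apply]

def Q4Deflated (s t : ℝ) : Matrix (Fin 7) (Fin 7) ℝ :=
  !![s, -2, -1, s - 1, s + 1, s, t;
     s - 1, -1, -1, s + 1, s + 1, s, t;
     0, 0, 1, 0, 0, 0, 0;
     -s - 1, 2, 1, -s, -s - 1, -s, t;
     s + 1, 2, 1, s - 1, s, s, -t;
     0, 0, 0, 0, 0, -1, 0;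
     s + 1, 2, 1, s + 1, s - 1, s, t - 1]

theorem Q4Deflation_mul_Q4_mul_inv (s t : ℕ) :
    Q4Deflation * Q4 s t * Q4DeflationInv = Q4Deflated s t := by
  ext i j
  fin_cases i <;> fin_cases j <;>
    simp [Q4Deflation, Q4DeflationInv, Q4, Q4Deflated, mul_apply, Fin.sum_univ_succ] <;> ring

def Q4Reduced (s t : ℝ) : Matrix (Fin 5) (Fin 5) ℝ :=
  !![s, -2, s - 1, s + 1, t;
     s - 1, -1, s + 1, s + 1, t;
     -s - 1, 2, -s, -s - 1, t;
     s + 1, 2, s - 1, s, -t;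
     s + 1, 2, s + 1, s - 1, t - 1]

theorem det_smul_one_sub_Q4Reduced (s t x : ℝ) :
    det (x • 1 - Q4Reduced s t) =
      x ^ 5 + (2 - s - t) * x ^ 4 - (6 * s + 6 * t + 8) * x ^ 3 +
        (8 * s * t + 4 * s + 12 * t - 10) * x ^ 2 + (32 * s * t + 22 * s + 22 * t + 7) * x +
        13 * s - 27 * t - 72 * s * t + 8 := by
  simp [Q4Reduced, det_succ_row_zero, Fin.sum_univ_succ, one_apply, Fin.succAbove]
  ring

theorem det_smul_one_sub_Q4 (s t : ℕ) (x : ℝ) :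
    det (x • 1 - Q4 s t) = (x - 1) * (x + 1) * det (x • 1 - Q4Reduced s t) := by
  rw [← det_smul_one_sub_conj Q4Deflation_mul_inv Q4DeflationInv_mul, Q4Deflation_mul_Q4_mul_inv,
    det_smul_one_sub_of_offDiag_row_eq_zero _ 2 ?_, det_smul_one_sub_of_offDiag_row_eq_zero _ 4 ?_]
  · have hminor : ((Q4Deflated s t).submatrix (Fin.succAbove 2) (Fin.succAbove 2)).submatrix
        (Fin.succAbove 4) (Fin.succAbove 4) = Q4Reduced s t := by
      ext i j
      fin_cases i <;> fin_cases j <;> rfl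
    rw [hminor]
    show (x - 1) * ((x - -1) * _) = _
    ring
  all_goals
    intro j hj
    fin_cases j <;> first | exact absurd rfl hj | rfl

theorem stmt14_general (s t n : ℕ) (hn : n = s + t + 5) (x : ℝ) :
    (x • (1 : Matrix (Fin 7) (Fin 7) ℝ) - Q4 s t).det =
      (x - 1) * (x + 1) *
        (x ^ 5 + (7 - (n : ℝ)) * x ^ 4 - (6 * (n : ℝ) - 22) * x ^ 3 +
          (8 * (s : ℝ) * (t : ℝ) + 4 * (n : ℝ) + 8 * (t : ℝ) - 30) * x ^ 2 +
          (32 * (s : ℝ) * (t : ℝ) + 22 * (n : ℝ) - 103) * x +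
          13 * (n : ℝ) - 72 * (s : ℝ) * (t : ℝ) - 40 * (t : ℝ) - 57) := by
  rw [det_smul_one_sub_Q4, det_smul_one_sub_Q4Reduced, hn]
  push_cast
  ring

/-- characteristic polynomial of `Q₄(s,t)` for `s, t ≥ 1`, `n = s + t + 5`. -/
theorem stmt14 (s t n : ℕ) (hs : 1 ≤ s) (ht : 1 ≤ t) (hn : n = s + t + 5) (x : ℝ) :
    (x • (1 : Matrix (Fin 7) (Fin 7) ℝ) - Q4 s t).det =
      (x - 1) * (x + 1) *
        (x ^ 5 + (7 - (n : ℝ)) * x ^ 4 - (6 * (n : ℝ) - 22) * x ^ 3 +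
          (8 * (s : ℝ) * (t : ℝ) + 4 * (n : ℝ) + 8 * (t : ℝ) - 30) * x ^ 2 +
          (32 * (s : ℝ) * (t : ℝ) + 22 * (n : ℝ) - 103) * x +
          13 * (n : ℝ) - 72 * (s : ℝ) * (t : ℝ) - 40 * (t : ℝ) - 57) :=
  stmt14_general s t n hn x
end

section
/- For all integers s, t ≥ 1 with n = s + t + 5, the largest eigenvalue of the n×n matrix A(K_n,H_2(s,t)^−) equals the largest eigenvalue of the 7×7 matrix Q_4(s,t). -/
open Matrix

/-!
The vertices of `H₂(s,t)` fall into seven classes: `v₁, …, v₅`, the pendant vertices at `v₄`, and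
the pendant vertices at `v₅`. With `f` the class map, `A = A(K_n,H₂(s,t)⁻)` is
`P.submatrix f f - 1` for the pattern `P = A(K_7,H₂(1,1)⁻) + 1`, and `Q₄(s,t)` is the quotient
matrix of this equitable partition. Eigenvectors of `Q₄` lift along the partition, so
`spec Q₄ ⊆ spec A`. Conversely, an eigenvector of `A` whose class sums all vanish has eigenvalue
`-1`, and otherwise its class sums form an eigenvector of `Q₄ᵀ`. As `A` has trace `0`, its largest
eigenvalue is `≥ 0 > -1`, hence lies in `spec Q₄`.
-/

open Finset Function

namespace Matrix

section Spectrum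

variable {K ι : Type*} [Field K] [Fintype ι] [DecidableEq ι]

theorem mem_spectrum_iff_exists_mulVec_eq_smul {A : Matrix ι ι K} {μ : K} :
    μ ∈ spectrum K A ↔ ∃ v ≠ 0, A *ᵥ v = μ • v := by
  rw [spectrum.mem_iff, isUnit_iff_isUnit_det, isUnit_iff_ne_zero, not_not,
    ← exists_mulVec_eq_zero_iff]
  simp only [sub_mulVec, Algebra.algebraMap_eq_smul_one, smul_mulVec, one_mulVec, sub_eq_zero,
    eq_comm]

theorem spectrum_transpose (A : Matrix ι ι K) : spectrum K Aᵀ = spectrum K A := by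
  ext μ
  rw [mem_spectrum_iff_isRoot_charpoly, mem_spectrum_iff_isRoot_charpoly, charpoly_transpose]

theorem IsHermitian.exists_nonneg_mem_spectrum [Nonempty ι] {A : Matrix ι ι ℝ}
    (hA : A.IsHermitian) (htr : A.trace = 0) : ∃ μ ∈ spectrum ℝ A, 0 ≤ μ := by
  by_contra! hneg
  have hsum : ∑ i, hA.eigenvalues i < 0 :=
    sum_neg (fun i _ => hneg _ (hA.eigenvalues_mem_spectrum_real i)) univ_nonempty
  have htr' := hA.trace_eq_sum_eigenvalues
  simp only [htr, RCLike.ofReal_real_eq_id, id] at htr'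
  exact hsum.ne htr'.symm

end Spectrum

section Quotient

variable {K ι κ : Type*} [Field K] [DecidableEq κ]

variable (K) in
def fiberMatrix (f : ι → κ) : Matrix ι κ K :=
  of fun i d => if f i = d then 1 else 0

theorem fiberMatrix_mulVec [Fintype κ] (f : ι → κ) (v : κ → K) :
    fiberMatrix K f *ᵥ v = v ∘ f := by
  ext i
  simp [fiberMatrix, mulVec, dotProduct]

theorem submatrix_eq_fiberMatrix_mul_mul_transpose [Fintype κ] (P : Matrix κ κ K) (f : ι → κ) :
    P.submatrix f f = fiberMatrix K f * P * (fiberMatrix K f)ᵀ := by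
  ext i j
  simp [fiberMatrix, Matrix.mul_apply]

variable [Fintype ι]

theorem transpose_fiberMatrix_mul_self (f : ι → κ) :
    (fiberMatrix K f)ᵀ * fiberMatrix K f = diagonal (fun d => (#{i | f i = d} : K)) := by
  ext c d
  simp only [fiberMatrix, Matrix.mul_apply, transpose_apply, of_apply, mul_boole, diagonal_apply]
  split_ifs with hcd
  · subst hcd
    rw [natCast_card_filter]
    exact sum_congr rfl fun i _ => by split_ifs <;> rfl
  · exact sum_eq_zero fun i _ => by grind

variable [Fintype κ] [DecidableEq ι]

/-- The quotient matrix of the equitable partition of `P.submatrix f f - 1` into the fibres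
of `f`. -/
def quotientMatrix (P : Matrix κ κ K) (f : ι → κ) : Matrix κ κ K :=
  P * diagonal (fun d => (#{i | f i = d} : K)) - 1

theorem submatrix_sub_one_mul_fiberMatrix (P : Matrix κ κ K) (f : ι → κ) :
    (P.submatrix f f - 1) * fiberMatrix K f = fiberMatrix K f * quotientMatrix P f := by
  rw [submatrix_eq_fiberMatrix_mul_mul_transpose, quotientMatrix, Matrix.sub_mul, Matrix.mul_sub,
    Matrix.mul_assoc _ (fiberMatrix K f)ᵀ, transpose_fiberMatrix_mul_self, Matrix.mul_assoc,
    Matrix.one_mul, Matrix.mul_one]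

theorem transpose_fiberMatrix_mul_submatrix_sub_one {P : Matrix κ κ K} (hP : P.IsSymm)
    (f : ι → κ) :
    (fiberMatrix K f)ᵀ * (P.submatrix f f - 1) = (quotientMatrix P f)ᵀ * (fiberMatrix K f)ᵀ := by
  rw [quotientMatrix, transpose_sub, transpose_mul, hP.eq, diagonal_transpose, transpose_one,
    ← transpose_fiberMatrix_mul_self, submatrix_eq_fiberMatrix_mul_mul_transpose, Matrix.mul_sub,
    Matrix.sub_mul]
  simp only [Matrix.mul_assoc, Matrix.mul_one, Matrix.one_mul]

theorem spectrum_quotientMatrix_subset (P : Matrix κ κ K) {f : ι → κ} (hf : Surjective f) :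
    spectrum K (quotientMatrix P f) ⊆ spectrum K (P.submatrix f f - 1) := by
  intro μ hμ
  obtain ⟨v, hv0, hQv⟩ := mem_spectrum_iff_exists_mulVec_eq_smul.1 hμ
  refine mem_spectrum_iff_exists_mulVec_eq_smul.2 ⟨fiberMatrix K f *ᵥ v, ?_, ?_⟩
  · rw [fiberMatrix_mulVec]
    exact fun h => hv0 (hf.injective_comp_right (h.trans (Pi.zero_comp f).symm))
  · rw [mulVec_mulVec, submatrix_sub_one_mul_fiberMatrix, ← mulVec_mulVec, hQv, mulVec_smul]

theorem mem_spectrum_quotientMatrix {P : Matrix κ κ K} (hP : P.IsSymm) (f : ι → κ) {μ : K}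
    (hμ : μ ∈ spectrum K (P.submatrix f f - 1)) (hμ1 : μ ≠ -1) :
    μ ∈ spectrum K (quotientMatrix P f) := by
  obtain ⟨w, hw0, hAw⟩ := mem_spectrum_iff_exists_mulVec_eq_smul.1 hμ
  rw [← spectrum_transpose]
  refine mem_spectrum_iff_exists_mulVec_eq_smul.2 ⟨(fiberMatrix K f)ᵀ *ᵥ w, fun h0 => ?_, ?_⟩
  · have hw : μ • w = -w := by
      rw [← hAw, submatrix_eq_fiberMatrix_mul_mul_transpose, sub_mulVec, ← mulVec_mulVec, h0,
        mulVec_zero, one_mulVec, zero_sub]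
    have : (μ + 1) • w = 0 := by rw [add_smul, hw, one_smul, neg_add_cancel]
    exact hw0 ((smul_eq_zero.1 this).resolve_left (by grind))
  · rw [mulVec_mulVec, ← transpose_fiberMatrix_mul_submatrix_sub_one hP, ← mulVec_mulVec, hAw,
      mulVec_smul]

end Quotient

end Matrix

theorem lam1_quotientMatrix {m k : ℕ} [NeZero m] {P : Matrix (Fin k) (Fin k) ℝ} (hP : P.IsSymm)
    (hdiag : ∀ d, P d d = 1) {f : Fin m → Fin k} (hf : Surjective f) :
    lam1 (quotientMatrix P f) = lam1 (P.submatrix f f - 1) := by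
  set A := P.submatrix f f - 1
  have hA : A.IsHermitian := isHermitian_iff_isSymm.2 ((hP.submatrix f).sub isSymm_one)
  have htr : A.trace = 0 := by simp [A, Matrix.trace, hdiag]
  obtain ⟨μ, hμ, hμ0⟩ := hA.exists_nonneg_mem_spectrum htr
  have hbdd := A.finite_spectrum.bddAbove
  have hmax : sSup (spectrum ℝ A) ∈ spectrum ℝ A :=
    Set.Nonempty.csSup_mem ⟨μ, hμ⟩ A.finite_spectrum
  have hmaxQ : sSup (spectrum ℝ A) ∈ spectrum ℝ (quotientMatrix P f) :=
    mem_spectrum_quotientMatrix hP f hmax (by linarith [le_csSup hbdd hμ])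
  exact IsGreatest.csSup_eq
    ⟨hmaxQ, fun x hx => le_csSup hbdd (spectrum_quotientMatrix_subset P hf hx)⟩

theorem signMat_isSymm {n : ℕ} {E : ℕ → ℕ → Prop} (hE : ∀ i j, E i j → E j i) :
    (signMat n E).IsSymm := by
  classical
  ext i j
  simp only [signMat, transpose_apply, of_apply, eq_comm (a := j)]
  exact if_congr Iff.rfl rfl (if_congr ⟨hE _ _, hE _ _⟩ rfl rfl)

theorem signMat_eq_submatrix_sub_one {n m : ℕ} {E E' : ℕ → ℕ → Prop} (f : Fin n → Fin m)
    (hE' : ∀ c : Fin m, ¬E' (c + 1) (c + 1))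
    (hf : ∀ a b : Fin n, E (a + 1) (b + 1) ↔ E' (f a + 1) (f b + 1)) :
    signMat n E = (signMat m E' + 1).submatrix f f - 1 := by
  classical
  ext a b
  by_cases hab : a = b
  · simp [signMat, hab]
  · by_cases hfab : f a = f b
    · simp [signMat, hab, hfab, (hf a b).not.2 (hfab ▸ hE' (f b))]
    · simp only [signMat, submatrix_apply, Matrix.sub_apply, Matrix.add_apply, of_apply,
        one_apply, if_neg hab, if_neg hfab, add_zero, sub_zero]
      exact if_congr (hf a b) rfl rfl

theorem Fin.card_filter_val_mem_Ico {n l u : ℕ} (hu : u ≤ n) :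
    #{i : Fin n | l ≤ (i : ℕ) ∧ (i : ℕ) < u} = u - l := by
  rw [← Nat.card_Ico, ← card_map Fin.valEmbedding]
  congr 1
  ext x
  simp only [mem_map, mem_filter, mem_univ, true_and, Fin.valEmbedding_apply, mem_Ico]
  constructor
  · rintro ⟨i, hi, rfl⟩
    exact hi
  · intro hx
    exact ⟨⟨x, by omega⟩, hx, rfl⟩

section H2

variable {s t : ℕ}

theorem adjPair_comm {a b i j : ℕ} : adjPair a b i j ↔ adjPair a b j i := by
  unfold adjPair
  tauto

theorem H2edge_symm {i j : ℕ} (h : H2edge s t i j) : H2edge s t j i := by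
  rw [H2edge] at h ⊢
  simp only [adjPair_comm (i := j)]
  tauto

theorem H2edge_irrefl {i : ℕ} : ¬H2edge s t i i := by
  simp only [H2edge, adjPair]
  omega

/-- The quotient map `H₂(s,t) → H₂(1,1)`: the `s` pendant vertices at `v₄` go to vertex `6` and
the `t` pendant vertices at `v₅` to vertex `7` (indices are labels minus one). -/
def collapsePendants (s t : ℕ) (i : Fin (s + t + 5)) : Fin 7 :=
  ⟨if (i : ℕ) < 5 then i else if (i : ℕ) < s + 5 then 5 else 6, by split_ifs <;> omega⟩

theorem val_collapsePendants (i : Fin (s + t + 5)) :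
    (collapsePendants s t i : ℕ) =
      if (i : ℕ) < 5 then (i : ℕ) else if (i : ℕ) < s + 5 then 5 else 6 :=
  rfl

-- The constants `1 + 5`, `1 + 6`, `1 + 1 + 5` are those of the unfolded `H2edge 1 1`, so that
-- these equivalences rewrite it clause by clause.
theorem collapsePendants_label_iff (a : Fin (s + t + 5)) :
    let x := (a : ℕ) + 1
    let y := (collapsePendants s t a : ℕ) + 1
    (x = 1 ↔ y = 1) ∧ (x = 2 ↔ y = 2) ∧ (x = 3 ↔ y = 3) ∧ (x = 4 ↔ y = 4) ∧ (x = 5 ↔ y = 5) ∧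
      (6 ≤ x ∧ x ≤ s + 5 ↔ 6 ≤ y ∧ y ≤ 1 + 5) ∧
      (s + 6 ≤ x ∧ x ≤ s + t + 5 ↔ 1 + 6 ≤ y ∧ y ≤ 1 + 1 + 5) := by
  have := a.isLt
  rw [val_collapsePendants]
  split_ifs <;> omega

theorem H2edge_iff_collapsePendants (a b : Fin (s + t + 5)) :
    H2edge s t (a + 1) (b + 1) ↔
      H2edge 1 1 (collapsePendants s t a + 1) (collapsePendants s t b + 1) := by
  obtain ⟨a1, a2, a3, a4, a5, a6, a7⟩ := collapsePendants_label_iff a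
  obtain ⟨b1, b2, b3, b4, b5, b6, b7⟩ := collapsePendants_label_iff b
  unfold H2edge adjPair
  rw [a1, a2, a3, a4, a5, a6, a7, b1, b2, b3, b4, b5, b6, b7]

theorem collapsePendants_surjective (hs : 1 ≤ s) (ht : 1 ≤ t) :
    Surjective (collapsePendants s t) := by
  intro d
  by_cases hd : d.val < 5
  · exact ⟨⟨d, by omega⟩, Fin.ext (by simp [val_collapsePendants, hd])⟩
  · by_cases hd5 : d.val = 5
    · exact ⟨⟨5, by omega⟩, Fin.ext (by simp [val_collapsePendants, hd5]; omega)⟩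
    · exact ⟨⟨s + 5, by omega⟩, Fin.ext (by simp [val_collapsePendants]; omega)⟩

theorem card_collapsePendants_fiber (d : Fin 7) :
    #{i | collapsePendants s t i = d} = ![1, 1, 1, 1, 1, s, t] d := by
  have hcard (l u : ℕ) (hu : u ≤ s + t + 5)
      (hd : ∀ x < s + t + 5,
        (if x < 5 then x else if x < s + 5 then 5 else 6) = (d : ℕ) ↔ l ≤ x ∧ x < u) :
      #{i | collapsePendants s t i = d} = u - l := by
    simp_rw [Fin.ext_iff, val_collapsePendants, hd _ (Fin.is_lt _)]
    exact Fin.card_filter_val_mem_Ico hu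
  fin_cases d
  · exact hcard 0 1 (by omega) (by grind)
  · exact hcard 1 2 (by omega) (by grind)
  · exact hcard 2 3 (by omega) (by grind)
  · exact hcard 3 4 (by omega) (by grind)
  · exact hcard 4 5 (by omega) (by grind)
  · exact (hcard 5 (s + 5) (by omega) (by grind)).trans (by simp)
  · exact (hcard (s + 5) (s + t + 5) (by omega) (by grind)).trans (by simp)

theorem Q4_eq_quotientMatrix (s t : ℕ) :
    Q4 s t = quotientMatrix (signMat 7 (H2edge 1 1) + 1) (collapsePendants s t) := by
  ext c d
  simp only [quotientMatrix, card_collapsePendants_fiber, Matrix.sub_apply, Matrix.add_apply,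
    mul_diagonal, one_apply]
  fin_cases c <;> fin_cases d <;> simp [Q4, signMat, H2edge, adjPair]

end H2

/-- for `s, t ≥ 1` and `n = s + t + 5`,
`λ₁(A(K_n,H₂(s,t)⁻)) = λ₁(Q₄(s,t))`. -/
theorem stmt15 (s t n : ℕ) (hs : 1 ≤ s) (ht : 1 ≤ t) (hn : n = s + t + 5) :
    lam1 (signMat n (H2edge s t)) = lam1 (Q4 s t) := by
  subst hn
  have hP : (signMat 7 (H2edge 1 1) + 1).IsSymm :=
    (signMat_isSymm fun _ _ => H2edge_symm).add isSymm_one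
  have hdiag : ∀ d, (signMat 7 (H2edge 1 1) + 1) d d = 1 := by simp [signMat]
  rw [signMat_eq_submatrix_sub_one (collapsePendants s t) (fun _ => H2edge_irrefl)
    H2edge_iff_collapsePendants, Q4_eq_quotientMatrix]
  exact (lam1_quotientMatrix hP hdiag (collapsePendants_surjective hs ht)).symm
end
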